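/- arXiv:1302.6869 — 3 statements merged into one kernel-verified Lean document; each statement's English description precedes it below -/
import Mathlib

section
/- Let (L, λ, Λ) be a YB-Lie algebra in an additive symmetric (or strict) monoidal category, i.e. λ is a self-invertible Yang–Baxter operator, Λ ∘ (id + λ) = 0, Λ ∘ (1 ⊗ Λ) ∘ (id + t_λ + w_λ) = 0, and λ ∘ (Λ ⊗ 1) = (1 ⊗ Λ) ∘ t_λ. Then L also satisfies the left λ-Jacobi identity: Λ ∘ (Λ ⊗ 1) ∘ (id + t_λ + w_λ) = 0. -/
open TensorProduct

variable {k : Type*} [Field k] {L : Type*} [AddCommGroup L] [Module k L]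

/-- The operator `c ⊗ 1` acting on the first two factors of `L ⊗ (L ⊗ L)`. -/
noncomputable def firstTwo (c : L ⊗[k] L →ₗ[k] L ⊗[k] L) :
    L ⊗[k] (L ⊗[k] L) →ₗ[k] L ⊗[k] (L ⊗[k] L) :=
  (TensorProduct.assoc k L L L).toLinearMap ∘ₗ
    (TensorProduct.map c LinearMap.id) ∘ₗ (TensorProduct.assoc k L L L).symm.toLinearMap

/-- The operator `1 ⊗ c` acting on the last two factors of `L ⊗ (L ⊗ L)`. -/
noncomputable def lastTwo (c : L ⊗[k] L →ₗ[k] L ⊗[k] L) :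
    L ⊗[k] (L ⊗[k] L) →ₗ[k] L ⊗[k] (L ⊗[k] L) :=
  LinearMap.lTensor L c

/-- `t_c = (c ⊗ 1) ∘ (1 ⊗ c)` on `L ⊗ (L ⊗ L)`. -/
noncomputable def tOp (c : L ⊗[k] L →ₗ[k] L ⊗[k] L) :
    L ⊗[k] (L ⊗[k] L) →ₗ[k] L ⊗[k] (L ⊗[k] L) :=
  firstTwo c ∘ₗ lastTwo c

/-- `w_c = (1 ⊗ c) ∘ (c ⊗ 1)` on `L ⊗ (L ⊗ L)`. -/
noncomputable def wOp (c : L ⊗[k] L →ₗ[k] L ⊗[k] L) :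
    L ⊗[k] (L ⊗[k] L) →ₗ[k] L ⊗[k] (L ⊗[k] L) :=
  lastTwo c ∘ₗ firstTwo c

/-- `Λ ⊗ 1 : L ⊗ (L ⊗ L) → L ⊗ L`, applying the bracket to the first two factors. -/
noncomputable def brFirst (Lam : L ⊗[k] L →ₗ[k] L) :
    L ⊗[k] (L ⊗[k] L) →ₗ[k] L ⊗[k] L :=
  (TensorProduct.map Lam LinearMap.id) ∘ₗ (TensorProduct.assoc k L L L).symm.toLinearMap

/-!
Antisymmetry gives `Λ ∘ λ = -Λ`, so compatibility turns `Λ ∘ (Λ ⊗ 1)` into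
`-Λ ∘ (1 ⊗ Λ) ∘ t_λ`. As `λ` is an involution satisfying the braid relation, `t_λ² = w_λ` and
`t_λ ∘ w_λ = id`, so `t_λ` fixes the cyclic sum `id + t_λ + w_λ`; the left λ-Jacobi identity is
therefore the negative of the right one.
-/

theorem mul_mul_one_add_add_of_braid {R : Type*} [Ring R] {a b : R} (ha : a * a = 1)
    (hb : b * b = 1) (hab : a * (b * a) = b * (a * b)) :
    a * b * (1 + a * b + b * a) = 1 + a * b + b * a := by
  have hsq : a * b * (a * b) = b * a :=
    calc a * b * (a * b) = a * (b * a) * b := by simp only [mul_assoc]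
      _ = b * a := by rw [hab]; simp only [mul_assoc, hb, mul_one]
  have hinv : a * b * (b * a) = 1 :=
    calc a * b * (b * a) = a * (b * b) * a := by simp only [mul_assoc]
      _ = 1 := by rw [hb, mul_one, ha]
  rw [mul_add, mul_add, mul_one, hsq, hinv]
  abel

lemma firstTwo_comp (c d : L ⊗[k] L →ₗ[k] L ⊗[k] L) :
    firstTwo c ∘ₗ firstTwo d = firstTwo (k := k) (c ∘ₗ d) := by
  ext x y z
  simp [firstTwo]

lemma firstTwo_id : firstTwo (k := k) (LinearMap.id : L ⊗[k] L →ₗ[k] L ⊗[k] L) = LinearMap.id := by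
  ext x y z
  simp [firstTwo]

lemma tOp_comp_id_add_tOp_add_wOp {lam : L ⊗[k] L →ₗ[k] L ⊗[k] L}
    (hinv : lam ∘ₗ lam = LinearMap.id)
    (hYB : firstTwo (k := k) lam ∘ₗ lastTwo lam ∘ₗ firstTwo lam
        = lastTwo lam ∘ₗ firstTwo lam ∘ₗ lastTwo lam) :
    tOp lam ∘ₗ (LinearMap.id + tOp lam + wOp lam) = LinearMap.id + tOp lam + wOp lam :=
  mul_mul_one_add_add_of_braid (R := Module.End k (L ⊗[k] (L ⊗[k] L)))
    (by rw [Module.End.mul_eq_comp, firstTwo_comp, hinv, firstTwo_id, Module.End.one_eq_id])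
    (by rw [Module.End.mul_eq_comp, lastTwo, ← LinearMap.lTensor_comp, hinv,
      LinearMap.lTensor_id, Module.End.one_eq_id])
    hYB

lemma comp_brFirst_eq_neg {lam : L ⊗[k] L →ₗ[k] L ⊗[k] L} {Lam : L ⊗[k] L →ₗ[k] L}
    (hAnti : Lam ∘ₗ (LinearMap.id + lam) = 0)
    (hComp : lam ∘ₗ brFirst Lam = LinearMap.lTensor L Lam ∘ₗ tOp lam) :
    Lam ∘ₗ brFirst Lam = -(Lam ∘ₗ LinearMap.lTensor L Lam ∘ₗ tOp lam) := by
  have hLam : Lam ∘ₗ lam = -Lam := by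
    rw [LinearMap.comp_add, LinearMap.comp_id] at hAnti
    exact (neg_eq_of_add_eq_zero_right hAnti).symm
  rw [← hComp, ← LinearMap.comp_assoc, hLam, LinearMap.neg_comp, neg_neg]

/-- If `(L, λ, Λ)` is a YB-Lie algebra (λ self-invertible Yang–Baxter operator,
antisymmetry `Λ ∘ (id + λ) = 0`, right λ-Jacobi identity
`Λ ∘ (1 ⊗ Λ) ∘ (id + t_λ + w_λ) = 0`, and compatibility
`λ ∘ (Λ ⊗ 1) = (1 ⊗ Λ) ∘ t_λ`), then `L` also satisfies the left λ-Jacobi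
identity `Λ ∘ (Λ ⊗ 1) ∘ (id + t_λ + w_λ) = 0`. -/
theorem stmt3 (lam : L ⊗[k] L →ₗ[k] L ⊗[k] L) (Lam : L ⊗[k] L →ₗ[k] L)
    (hinv : lam ∘ₗ lam = LinearMap.id)
    (hYB : firstTwo (k := k) lam ∘ₗ lastTwo lam ∘ₗ firstTwo lam
        = lastTwo lam ∘ₗ firstTwo lam ∘ₗ lastTwo lam)
    (hAnti : Lam ∘ₗ (LinearMap.id + lam) = 0)
    (hJac : Lam ∘ₗ LinearMap.lTensor L Lam ∘ₗ (LinearMap.id + tOp lam + wOp lam) = 0)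
    (hComp : lam ∘ₗ brFirst Lam = LinearMap.lTensor L Lam ∘ₗ tOp lam) :
    Lam ∘ₗ brFirst Lam ∘ₗ (LinearMap.id + tOp lam + wOp lam) = 0 := by
  calc Lam ∘ₗ brFirst Lam ∘ₗ (LinearMap.id + tOp lam + wOp lam)
      = -(Lam ∘ₗ LinearMap.lTensor L Lam ∘ₗ tOp lam ∘ₗ (LinearMap.id + tOp lam + wOp lam)) := by
        rw [← LinearMap.comp_assoc, comp_brFirst_eq_neg hAnti hComp]
        simp only [LinearMap.neg_comp, LinearMap.comp_assoc]
    _ = -(Lam ∘ₗ LinearMap.lTensor L Lam ∘ₗ (LinearMap.id + tOp lam + wOp lam)) := by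
        rw [tOp_comp_id_add_tOp_add_wOp hinv hYB]
    _ = 0 := by rw [hJac, neg_zero]
end

section
/- Let L and C be finite-dimensional vector spaces with (C, L, ev, coev) a duality (adjoint pair), e.g. C = L*. If (L, λ, Λ) is a YB-Lie algebra, then C with γ and Υ defined by transposing λ and Λ through ev and coev is a YB-Lie coalgebra; in particular, antisymmetry of Λ implies γ ∘ Υ = −Υ. -/
open TensorProduct

variable {k : Type*} [Field k] {L : Type*} [AddCommGroup L] [Module k L]

/-!
Transposition through the duality is additive, reverses composition, is compatible with tensor
products and associators, and is faithful because the identifications with dual spaces are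
isomorphisms. Each axiom of the YB-Lie algebra `(L, λ, Λ)` is an identity between composites of
such maps, so it transposes to the corresponding axiom for `(C, γ, Υ)`; the reversal of
composition is why `t_λ` and `w_λ` trade places.
-/

open Module

section Transpose

variable {R : Type*} [CommRing R]
variable {M₁ M₂ M₃ N₁ N₂ N₃ : Type*}
  [AddCommMonoid M₁] [Module R M₁] [AddCommMonoid M₂] [Module R M₂] [AddCommMonoid M₃] [Module R M₃]
  [AddCommMonoid N₁] [Module R N₁] [AddCommMonoid N₂] [Module R N₂] [AddCommMonoid N₃] [Module R N₃]

def IsTranspose (e₁ : M₁ ≃ₗ[R] Dual R N₁) (e₂ : M₂ ≃ₗ[R] Dual R N₂) (a : M₁ →ₗ[R] M₂)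
    (f : N₂ →ₗ[R] N₁) : Prop :=
  e₂.toLinearMap ∘ₗ a = f.dualMap ∘ₗ e₁.toLinearMap

variable {e₁ : M₁ ≃ₗ[R] Dual R N₁} {e₂ : M₂ ≃ₗ[R] Dual R N₂} {e₃ : M₃ ≃ₗ[R] Dual R N₃}

theorem isTranspose_iff {a : M₁ →ₗ[R] M₂} {f : N₂ →ₗ[R] N₁} :
    IsTranspose e₁ e₂ a f ↔ ∀ x, e₂ (a x) = (e₁ x).comp f := by
  simp only [IsTranspose, LinearMap.ext_iff, LinearMap.comp_apply, LinearEquiv.coe_coe,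
    LinearMap.dualMap_apply']

theorem isTranspose_symm_comp_dualMap_comp (e₁ : M₁ ≃ₗ[R] Dual R N₁) (e₂ : M₂ ≃ₗ[R] Dual R N₂)
    (f : N₂ →ₗ[R] N₁) :
    IsTranspose e₁ e₂ (e₂.symm.toLinearMap ∘ₗ f.dualMap ∘ₗ e₁.toLinearMap) f := by
  ext x
  simp

theorem isTranspose_refl_symm_comp_dualMap (e₂ : M₂ ≃ₗ[R] Dual R N₂) (f : N₂ →ₗ[R] N₁) :
    IsTranspose (LinearEquiv.refl R (Dual R N₁)) e₂ (e₂.symm.toLinearMap ∘ₗ f.dualMap) f := by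
  ext x
  simp

namespace IsTranspose

theorem id : IsTranspose e₁ e₁ LinearMap.id LinearMap.id := by
  simp [IsTranspose]

theorem zero : IsTranspose e₁ e₂ 0 0 :=
  isTranspose_iff.mpr fun x => by simp

theorem add {a b : M₁ →ₗ[R] M₂} {f g : N₂ →ₗ[R] N₁} (ha : IsTranspose e₁ e₂ a f)
    (hb : IsTranspose e₁ e₂ b g) : IsTranspose e₁ e₂ (a + b) (f + g) := by
  rw [isTranspose_iff] at *
  intro x
  rw [LinearMap.add_apply, map_add, ha, hb, LinearMap.comp_add]

theorem comp {a : M₁ →ₗ[R] M₂} {b : M₂ →ₗ[R] M₃} {f : N₂ →ₗ[R] N₁} {g : N₃ →ₗ[R] N₂}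
    (hb : IsTranspose e₂ e₃ b g) (ha : IsTranspose e₁ e₂ a f) :
    IsTranspose e₁ e₃ (b ∘ₗ a) (f ∘ₗ g) := by
  rw [IsTranspose, ← LinearMap.comp_assoc, hb, LinearMap.comp_assoc, ha, ← LinearMap.comp_assoc,
    LinearMap.dualMap_comp_dualMap]

theorem symm {a : M₁ ≃ₗ[R] M₂} {f : N₂ ≃ₗ[R] N₁} (h : IsTranspose e₁ e₂ a f) :
    IsTranspose e₂ e₁ a.symm f.symm := by
  rw [isTranspose_iff] at h ⊢
  intro x
  ext n
  simpa using (LinearMap.congr_fun (h (a.symm x)) (f.symm n)).symm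

theorem unique {a b : M₁ →ₗ[R] M₂} {f g : N₂ →ₗ[R] N₁} (ha : IsTranspose e₁ e₂ a f)
    (hb : IsTranspose e₁ e₂ b g) (hfg : f = g) : a = b :=
  (LinearMap.cancel_left e₂.injective).mp (by rw [ha, hb, hfg])

end IsTranspose

end Transpose

section TensorTranspose

variable {R : Type*} [CommRing R]
variable {M₁ M₂ M₃ M₁' M₂' N₁ N₂ N₃ N₁' N₂' : Type*}
  [AddCommMonoid M₁] [Module R M₁] [AddCommMonoid M₂] [Module R M₂] [AddCommMonoid M₃] [Module R M₃]
  [AddCommMonoid M₁'] [Module R M₁'] [AddCommMonoid M₂'] [Module R M₂']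
  [AddCommMonoid N₁] [Module R N₁] [Module.Free R N₁] [Module.Finite R N₁]
  [AddCommMonoid N₂] [Module R N₂] [Module.Free R N₂] [Module.Finite R N₂]
  [AddCommMonoid N₃] [Module R N₃] [Module.Free R N₃] [Module.Finite R N₃]
  [AddCommMonoid N₁'] [Module R N₁'] [Module.Free R N₁'] [Module.Finite R N₁']
  [AddCommMonoid N₂'] [Module R N₂'] [Module.Free R N₂'] [Module.Finite R N₂']

noncomputable def dualTensorCongr (e : M₁ ≃ₗ[R] Dual R N₁) (e' : M₁' ≃ₗ[R] Dual R N₁') :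
    M₁ ⊗[R] M₁' ≃ₗ[R] Dual R (N₁ ⊗[R] N₁') :=
  TensorProduct.congr e e' ≪≫ₗ TensorProduct.dualDistribEquiv R N₁ N₁'

@[simp]
theorem dualTensorCongr_tmul (e : M₁ ≃ₗ[R] Dual R N₁) (e' : M₁' ≃ₗ[R] Dual R N₁') (x : M₁)
    (x' : M₁') (n : N₁) (n' : N₁') :
    dualTensorCongr e e' (x ⊗ₜ x') (n ⊗ₜ n') = e x n * e' x' n' := by
  simp [dualTensorCongr]

theorem dualTensorCongr_refl_refl :
    dualTensorCongr (LinearEquiv.refl R (Dual R N₁)) (LinearEquiv.refl R (Dual R N₁')) =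
      TensorProduct.dualDistribEquiv R N₁ N₁' := by
  simp [dualTensorCongr]

theorem IsTranspose.tensorMap {e₁ : M₁ ≃ₗ[R] Dual R N₁} {e₂ : M₂ ≃ₗ[R] Dual R N₂}
    {e₁' : M₁' ≃ₗ[R] Dual R N₁'} {e₂' : M₂' ≃ₗ[R] Dual R N₂'} {a : M₁ →ₗ[R] M₂}
    {a' : M₁' →ₗ[R] M₂'} {f : N₂ →ₗ[R] N₁} {f' : N₂' →ₗ[R] N₁'} (h : IsTranspose e₁ e₂ a f)
    (h' : IsTranspose e₁' e₂' a' f') :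
    IsTranspose (dualTensorCongr e₁ e₁') (dualTensorCongr e₂ e₂') (TensorProduct.map a a')
      (TensorProduct.map f f') := by
  rw [isTranspose_iff] at h h'
  refine TensorProduct.ext' fun x x' => TensorProduct.ext' fun n n' => ?_
  simp [h, h']

theorem isTranspose_assoc (e₁ : M₁ ≃ₗ[R] Dual R N₁) (e₂ : M₂ ≃ₗ[R] Dual R N₂)
    (e₃ : M₃ ≃ₗ[R] Dual R N₃) :
    IsTranspose (dualTensorCongr (dualTensorCongr e₁ e₂) e₃)
      (dualTensorCongr e₁ (dualTensorCongr e₂ e₃)) (TensorProduct.assoc R M₁ M₂ M₃)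
      (TensorProduct.assoc R N₁ N₂ N₃).symm := by
  refine TensorProduct.ext_threefold fun x y z => ?_
  refine TensorProduct.ext' fun n t => ?_
  induction t using TensorProduct.induction_on with
  | zero => simp
  | tmul n' n'' => simp [mul_assoc]
  | add t t' ht ht' => simp only [tmul_add, map_add, ht, ht']

end TensorTranspose

section YangBaxterTranspose

variable {C : Type*} [AddCommGroup C] [Module k C] [FiniteDimensional k L]
  {e : C ≃ₗ[k] Dual k L}
  {g : C ⊗[k] C →ₗ[k] C ⊗[k] C} {f : L ⊗[k] L →ₗ[k] L ⊗[k] L}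

namespace IsTranspose

theorem lastTwo (h : IsTranspose (dualTensorCongr e e) (dualTensorCongr e e) g f) :
    IsTranspose (dualTensorCongr e (dualTensorCongr e e)) (dualTensorCongr e (dualTensorCongr e e))
      (_root_.lastTwo g) (_root_.lastTwo f) :=
  IsTranspose.id.tensorMap h

theorem firstTwo (h : IsTranspose (dualTensorCongr e e) (dualTensorCongr e e) g f) :
    IsTranspose (dualTensorCongr e (dualTensorCongr e e)) (dualTensorCongr e (dualTensorCongr e e))
      (_root_.firstTwo g) (_root_.firstTwo f) := by
  have := (isTranspose_assoc e e e).comp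
    ((h.tensorMap (IsTranspose.id (e₁ := e))).comp (isTranspose_assoc e e e).symm)
  rwa [LinearEquiv.symm_symm, LinearMap.comp_assoc] at this

theorem wOp (h : IsTranspose (dualTensorCongr e e) (dualTensorCongr e e) g f) :
    IsTranspose (dualTensorCongr e (dualTensorCongr e e)) (dualTensorCongr e (dualTensorCongr e e))
      (_root_.wOp g) (tOp f) :=
  h.lastTwo.comp h.firstTwo

theorem tOp (h : IsTranspose (dualTensorCongr e e) (dualTensorCongr e e) g f) :
    IsTranspose (dualTensorCongr e (dualTensorCongr e e)) (dualTensorCongr e (dualTensorCongr e e))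
      (_root_.tOp g) (_root_.wOp f) :=
  h.firstTwo.comp h.lastTwo

end IsTranspose

end YangBaxterTranspose

open Module in
/-- Let `L` be a finite-dimensional YB-Lie algebra `(L, λ, Λ)` over `k` and
`C = L*` its dual (which, with the canonical evaluation and coevaluation, forms
an adjoint pair with `L`).  Then `C`, with `γ` and `Υ` obtained by transposing
`λ` and `Λ` through the duality, is a YB-Lie coalgebra: `γ` is a self-invertible
Yang–Baxter operator, `Υ + γ ∘ Υ = 0` (in particular antisymmetry of `Λ` gives
`γ ∘ Υ = −Υ`), the co-Jacobi identity holds, and `γ` and `Υ` are compatible. -/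
theorem stmt10 [FiniteDimensional k L]
    (lam : L ⊗[k] L →ₗ[k] L ⊗[k] L) (Lam : L ⊗[k] L →ₗ[k] L)
    (hinv : lam ∘ₗ lam = LinearMap.id)
    (hYB : firstTwo (k := k) lam ∘ₗ lastTwo lam ∘ₗ firstTwo lam
        = lastTwo lam ∘ₗ firstTwo lam ∘ₗ lastTwo lam)
    (hAnti : Lam ∘ₗ (LinearMap.id + lam) = 0)
    (hJac : Lam ∘ₗ LinearMap.lTensor L Lam ∘ₗ (LinearMap.id + tOp lam + wOp lam) = 0)
    (hComp : lam ∘ₗ brFirst Lam = LinearMap.lTensor L Lam ∘ₗ tOp lam) :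
    letI C := Module.Dual k L
    letI γ : C ⊗[k] C →ₗ[k] C ⊗[k] C :=
      (TensorProduct.dualDistribEquiv k L L).symm.toLinearMap ∘ₗ lam.dualMap ∘ₗ
        (TensorProduct.dualDistribEquiv k L L).toLinearMap
    letI Υ : C →ₗ[k] C ⊗[k] C :=
      (TensorProduct.dualDistribEquiv k L L).symm.toLinearMap ∘ₗ Lam.dualMap
    -- γ is a self-invertible Yang–Baxter operator:
    (γ ∘ₗ γ = LinearMap.id) ∧
    (firstTwo (k := k) γ ∘ₗ lastTwo γ ∘ₗ firstTwo γ
      = lastTwo γ ∘ₗ firstTwo γ ∘ₗ lastTwo γ) ∧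
    -- antisymmetry: Υ + γ ∘ Υ = 0 :
    (Υ + γ ∘ₗ Υ = 0) ∧
    -- co-Jacobi identity:
    ((LinearMap.id + wOp γ + tOp γ) ∘ₗ LinearMap.lTensor C Υ ∘ₗ Υ = 0) ∧
    -- compatibility of γ and Υ:
    ((TensorProduct.assoc k C C C).toLinearMap ∘ₗ TensorProduct.map Υ LinearMap.id ∘ₗ γ
      = wOp γ ∘ₗ LinearMap.lTensor C Υ) := by
  set γ : Dual k L ⊗[k] Dual k L →ₗ[k] Dual k L ⊗[k] Dual k L :=
    (dualDistribEquiv k L L).symm.toLinearMap ∘ₗ lam.dualMap ∘ₗ (dualDistribEquiv k L L).toLinearMap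
  set Υ : Dual k L →ₗ[k] Dual k L ⊗[k] Dual k L :=
    (dualDistribEquiv k L L).symm.toLinearMap ∘ₗ Lam.dualMap
  set e := LinearEquiv.refl k (Dual k L)
  have hγ : IsTranspose (dualTensorCongr e e) (dualTensorCongr e e) γ lam := by
    rw [dualTensorCongr_refl_refl]
    exact isTranspose_symm_comp_dualMap_comp _ _ _
  have hΥ : IsTranspose e (dualTensorCongr e e) Υ Lam := by
    rw [dualTensorCongr_refl_refl]
    exact isTranspose_refl_symm_comp_dualMap _ _
  have hlΥ : IsTranspose (dualTensorCongr e e) (dualTensorCongr e (dualTensorCongr e e))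
      (LinearMap.lTensor (Dual k L) Υ) (LinearMap.lTensor L Lam) :=
    IsTranspose.id.tensorMap hΥ
  refine ⟨(hγ.comp hγ).unique .id hinv, ?_, ?_, ?_, ?_⟩
  · refine (hγ.firstTwo.comp (hγ.lastTwo.comp hγ.firstTwo)).unique
      (hγ.lastTwo.comp (hγ.firstTwo.comp hγ.lastTwo)) ?_
    simpa only [LinearMap.comp_assoc] using hYB
  · refine (hΥ.add (hγ.comp hΥ)).unique .zero ?_
    rw [← hAnti, LinearMap.comp_add, LinearMap.comp_id]
  · refine (((IsTranspose.id.add hγ.wOp).add hγ.tOp).comp (hlΥ.comp hΥ)).unique .zero ?_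
    simpa only [LinearMap.comp_assoc] using hJac
  · have hΥ₁ := hΥ.tensorMap (IsTranspose.id (e₁ := e))
    refine ((isTranspose_assoc e e e).comp (hΥ₁.comp hγ)).unique (hγ.wOp.comp hlΥ) ?_
    exact (LinearMap.comp_assoc _ _ _).trans hComp
end

section
/- Let (H, K, ◇) be a Takeuchi pair of bialgebras over a field k, (M, ρ^K) a left K-comodule, and give M the left H-module structure h·m = Σ ◇(h ⊗ m⁽⁻¹⁾) m⁽⁰⁾. Then the P(H)-Lie module structure on M obtained by restricting the H-action to primitive elements coincides with the P(H)-Lie module structure obtained from the Q(K)-Lie comodule structure (induced by K → Q(K)) via the Michaelis pairing ev : P(H) ⊗ Q(K) → k; in particular the square of forgetful/induction functors CoMod(K) → Mod(H) → LieMod(P(H)) and CoMod(K) → LieCoMod(Q(K)) → LieMod(P(H)) commutes. -/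
/-!
A primitive `p` has `ε(p) = 0`, so `◇(p, 1) = ε(p) = 0` and `◇(p, x) = ◇(p, x - ε(x)1) = ev(p, π̄ x)`,
where `π̄ : K → Q(K)` is the projection. Pairing the `K`-coaction and the induced `Q(K)`-coaction
of `M` with `p` therefore gives the same endomorphism of `M`.
-/

open TensorProduct Coalgebra

variable {k : Type*} [Field k]

noncomputable def primitives (k H : Type*) [Field k] [Ring H] [Bialgebra k H] :
    Submodule k H where
  carrier := {x : H | comul (R := k) x = x ⊗ₜ[k] (1 : H) + (1 : H) ⊗ₜ[k] x}
  add_mem' := by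
    intro a b ha hb
    simp only [Set.mem_setOf_eq] at *
    rw [map_add, ha, hb, add_tmul, tmul_add]
    abel
  zero_mem' := by simp
  smul_mem' := by
    intro c x hx
    simp only [Set.mem_setOf_eq] at *
    rw [map_smul, hx, smul_add, smul_tmul', tmul_smul, smul_tmul']

theorem counit_eq_zero_of_mem_primitives {H : Type*} [Ring H] [Bialgebra k H] {x : H}
    (hx : x ∈ primitives k H) : counit (R := k) x = 0 := by
  have hΔ : comul (R := k) x = x ⊗ₜ[k] (1 : H) + (1 : H) ⊗ₜ[k] x := hx
  have h := Coalgebra.rTensor_counit_comul (R := k) x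
  rw [hΔ, map_add, LinearMap.rTensor_tmul, LinearMap.rTensor_tmul, Bialgebra.counit_one,
    add_eq_right] at h
  simpa using congrArg (counit (R := k) ∘ TensorProduct.lid k H) h

theorem LinearMap.map_sub_algebraMap_of_map_one_eq_zero {R A : Type*} [CommRing R] [Ring A]
    [Algebra R A] (f : A →ₗ[R] R) (hf : f 1 = 0) (x : A) (c : R) :
    f (x - algebraMap R A c) = f x := by
  rw [map_sub, Algebra.algebraMap_eq_smul_one, map_smul, hf, smul_zero, sub_zero]

theorem stmt19_general {H K M : Type*} [Ring H] [Bialgebra k H] [Ring K] [Bialgebra k K]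
    [AddCommGroup M] [Module k M]
    (D : H →ₗ[k] K →ₗ[k] k)
    (h1 : ∀ h : H, D h 1 = counit (R := k) h)
    -- a left `K`-comodule `(M, ρ)`:
    (ρ : M →ₗ[k] K ⊗[k] M)
    -- data of the Michaelis pair `(P(H), Q(K), ev)`:
    (hproj : ∀ x : K, x - algebraMap k K (counit (R := k) x)
      ∈ LinearMap.ker (counit (R := k) (A := K))) :
    letI P : Submodule k H := primitives k H
    letI I : Submodule k K := LinearMap.ker (counit (R := k) (A := K))
    letI I2 : Submodule k K := I * I
    letI QK := ↥I ⧸ Submodule.comap I.subtype I2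
    letI π : ↥I →ₗ[k] QK := (Submodule.comap I.subtype I2).mkQ
    -- the projection `K → Q(K)`, `x ↦ x − ε(x)1 mod I²`:
    letI πK : K →ₗ[k] QK := π ∘ₗ
      ((LinearMap.id - (Algebra.linearMap k K) ∘ₗ
        (counit (R := k) (A := K))).codRestrict I hproj)
    -- the `H`-module structure on `M` induced by `◇`:
    letI act : H → M →ₗ[k] M := fun h =>
      (TensorProduct.lid k M).toLinearMap ∘ₗ
        TensorProduct.map (D h) LinearMap.id ∘ₗ ρ
    -- the `Q(K)`-Lie comodule structure on `M`:
    letI δQ : M →ₗ[k] QK ⊗[k] M := TensorProduct.map πK LinearMap.id ∘ₗ ρ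
    ∀ ev : ↥P →ₗ[k] QK →ₗ[k] k,
      -- `ev` is the Michaelis pairing induced by `◇`:
      (∀ (p : ↥P) (c : ↥I), ev p (π c) = D p.1 c.1) →
      -- the two `P(H)`-Lie module structures on `M` coincide:
      ∀ (p : ↥P) (m : M),
        act p.1 m
          = (TensorProduct.lid k M)
              (TensorProduct.map (ev p) LinearMap.id (δQ m)) := by
  intro ev hev p m
  have hD1 : D p.1 1 = 0 := (h1 p.1).trans (counit_eq_zero_of_mem_primitives p.2)
  simp only [LinearMap.comp_apply]
  induction ρ m using TensorProduct.induction_on with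
  | zero => simp only [map_zero]
  | tmul x n =>
    simp only [map_tmul, LinearMap.comp_apply, hev, LinearMap.id_apply, LinearEquiv.coe_coe,
      lid_tmul]
    exact congrArg (· • n) (LinearMap.map_sub_algebraMap_of_map_one_eq_zero _ hD1 x _).symm
  | add t t' ht ht' => simp only [map_add, ht, ht']

/-- Let `(H, K, ◇)` be a Takeuchi pair of bialgebras over a field `k`, `(M, ρ)` a
left `K`-comodule, and equip `M` with the left `H`-module structure
`h·m = Σ ◇(h ⊗ m⁽⁻¹⁾) m⁽⁰⁾`.  Then the `P(H)`-Lie module structure on `M`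
obtained by restricting this `H`-action to primitive elements coincides with the
`P(H)`-Lie module structure obtained from the induced `Q(K)`-Lie comodule structure
via the Michaelis pairing `ev : P(H) ⊗ Q(K) → k`.  In particular the square of
functors `CoMod(K) → Mod(H) → LieMod(P(H))` and
`CoMod(K) → LieCoMod(Q(K)) → LieMod(P(H))` commutes. -/
theorem stmt19 {H K M : Type*} [Ring H] [Bialgebra k H] [Ring K] [Bialgebra k K]
    [AddCommGroup M] [Module k M]
    (D : H →ₗ[k] K →ₗ[k] k)
    (h1 : ∀ h : H, D h 1 = counit (R := k) h)
    (h2 : ∀ c : K, D 1 c = counit (R := k) c)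
    (h3 : ∀ (h h' : H) (c : K), D (h * h') c
      = (TensorProduct.lid k k) (TensorProduct.map (D h) (D h') (comul (R := k) c)))
    (h4 : ∀ (h : H) (c c' : K), D h (c * c')
      = (TensorProduct.lid k k)
          (TensorProduct.map (D.flip c) (D.flip c') (comul (R := k) h)))
    -- a left `K`-comodule `(M, ρ)`:
    (ρ : M →ₗ[k] K ⊗[k] M)
    (hcounit : ∀ m : M,
      (TensorProduct.lid k M)
        (TensorProduct.map (counit (R := k)) LinearMap.id (ρ m)) = m)
    (hcoassoc : LinearMap.lTensor K ρ ∘ₗ ρ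
      = (TensorProduct.assoc k K K M).toLinearMap ∘ₗ
          TensorProduct.map (comul (R := k)) LinearMap.id ∘ₗ ρ)
    -- data of the Michaelis pair `(P(H), Q(K), ev)`:
    (hproj : ∀ x : K, x - algebraMap k K (counit (R := k) x)
      ∈ LinearMap.ker (counit (R := k) (A := K))) :
    letI P : Submodule k H := primitives k H
    letI I : Submodule k K := LinearMap.ker (counit (R := k) (A := K))
    letI I2 : Submodule k K := I * I
    letI QK := ↥I ⧸ Submodule.comap I.subtype I2
    letI π : ↥I →ₗ[k] QK := (Submodule.comap I.subtype I2).mkQ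
    -- the projection `K → Q(K)`, `x ↦ x − ε(x)1 mod I²`:
    letI πK : K →ₗ[k] QK := π ∘ₗ
      ((LinearMap.id - (Algebra.linearMap k K) ∘ₗ
        (counit (R := k) (A := K))).codRestrict I hproj)
    -- the `H`-module structure on `M` induced by `◇`:
    letI act : H → M →ₗ[k] M := fun h =>
      (TensorProduct.lid k M).toLinearMap ∘ₗ
        TensorProduct.map (D h) LinearMap.id ∘ₗ ρ
    -- the `Q(K)`-Lie comodule structure on `M`:
    letI δQ : M →ₗ[k] QK ⊗[k] M := TensorProduct.map πK LinearMap.id ∘ₗ ρ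
    ∀ ev : ↥P →ₗ[k] QK →ₗ[k] k,
      -- `ev` is the Michaelis pairing induced by `◇`:
      (∀ (p : ↥P) (c : ↥I), ev p (π c) = D p.1 c.1) →
      -- the two `P(H)`-Lie module structures on `M` coincide:
      ∀ (p : ↥P) (m : M),
        act p.1 m
          = (TensorProduct.lid k M)
              (TensorProduct.map (ev p) LinearMap.id (δQ m)) :=
  stmt19_general D h1 ρ hproj
end
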